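/- arXiv:math/0410495 — 4 statements merged into one kernel-verified Lean document; each statement's English description precedes it below -/
import Mathlib

section
/- Let C be a preadditive category with a trace τ valued in an abelian group A, and define the τ-Euler characteristic of a bounded complex Ω over C by χ_τ(Ω) := Σᵣ (−1)ʳ τ(I_{Ωʳ}). If two bounded complexes Ωₐ and Ω_b are homotopy equivalent, then χ_τ(Ωₐ) = χ_τ(Ω_b). -/
/-!
The alternating trace sum `L(f) = Σᵣ (−1)ʳ τ(fʳ)` of a chain endomorphism `f` of a bounded complex
is a homotopy invariant: if `f − g = dh + hd`, the trace property gives `τ(dʳ hʳ⁺¹) = τ(hʳ⁺¹ dʳ)`,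
so the two homotopy terms are the same sequence shifted by one degree and cancel in the
alternating sum. It also satisfies `L(FG) = L(GF)` degreewise. For a homotopy equivalence
`F : Ωₐ → Ω_b`, `G : Ω_b → Ωₐ` this gives `χ(Ωₐ) = L(GF) = L(FG) = χ(Ω_b)`.
-/

open CategoryTheory CategoryTheory.Limits

lemma finsum_negOnePow_smul_comp_add_one {A : Type*} [AddCommGroup A] (c : ℤ → A) :
    ∑ᶠ r : ℤ, (r.negOnePow : ℤ) • c (r + 1) = -∑ᶠ r : ℤ, (r.negOnePow : ℤ) • c r := by
  rw [← finsum_neg_distrib,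
    ← finsum_comp_equiv (Equiv.addRight 1) (f := fun r => -((r.negOnePow : ℤ) • c r))]
  refine finsum_congr fun r => ?_
  simp only [Equiv.coe_addRight, Int.negOnePow_succ, Units.val_neg, neg_smul, neg_neg]

namespace CochainComplex

variable {C : Type*} [Category C] [Preadditive C] {A : Type*} [AddCommGroup A]
  (τ : ∀ X : C, (X ⟶ X) → A)

noncomputable def lefschetzNumber {K : CochainComplex C ℤ} (f : K ⟶ K) : A :=
  ∑ᶠ r : ℤ, (r.negOnePow : ℤ) • τ (K.X r) (f.f r)

lemma lefschetzNumber_comp_comm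
    (htr : ∀ (X Y : C) (F : X ⟶ Y) (G : Y ⟶ X), τ X (F ≫ G) = τ Y (G ≫ F))
    {K L : CochainComplex C ℤ} (F : K ⟶ L) (G : L ⟶ K) :
    lefschetzNumber τ (F ≫ G) = lefschetzNumber τ (G ≫ F) :=
  finsum_congr fun r => by simp only [HomologicalComplex.comp_f, htr]

variable (hadd : ∀ (X : C) (f g : X ⟶ X), τ X (f + g) = τ X f + τ X g)
include hadd

lemma trace_eq_zero_of_isZero {X : C} (hX : IsZero X) (f : X ⟶ X) : τ X f = 0 := by
  rw [hX.eq_of_src f 0]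
  exact (AddMonoidHom.mk' (τ X) (hadd X)).map_zero

lemma support_negOnePow_smul_trace_subset {K : CochainComplex C ℤ} {s : Finset ℤ}
    (hs : ∀ r, r ∉ s → IsZero (K.X r)) (φ : ∀ r, K.X r ⟶ K.X r) :
    (fun r : ℤ => (r.negOnePow : ℤ) • τ (K.X r) (φ r)).support ⊆ s := fun r hr =>
  by_contra fun hrs => hr (by simp only [trace_eq_zero_of_isZero τ hadd (hs r hrs), smul_zero])

lemma lefschetzNumber_eq_of_homotopy
    (htr : ∀ (X Y : C) (F : X ⟶ Y) (G : Y ⟶ X), τ X (F ≫ G) = τ Y (G ≫ F))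
    {K : CochainComplex C ℤ} {s : Finset ℤ} (hs : ∀ r, r ∉ s → IsZero (K.X r)) {f g : K ⟶ K}
    (H : Homotopy f g) : lefschetzNumber τ f = lefschetzNumber τ g := by
  set b : ℤ → A := fun r => τ (K.X r) (H.hom r (r - 1) ≫ K.d (r - 1) r)
  have hf : ∀ r, τ (K.X r) (f.f r)
      = (τ (K.X r) (K.d r (r + 1) ≫ H.hom (r + 1) r) + b r) + τ (K.X r) (g.f r) := fun r => by
    rw [H.comm r, dNext_eq H.hom (show (ComplexShape.up ℤ).Rel r (r + 1) from rfl),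
      prevD_eq H.hom (show (ComplexShape.up ℤ).Rel (r - 1) r from sub_add_cancel r 1),
      hadd, hadd]
  -- the trace property turns `dʳ hʳ⁺¹` into `hʳ⁺¹ dʳ`, the second homotopy term one degree up
  have hshift : ∀ r, τ (K.X r) (K.d r (r + 1) ≫ H.hom (r + 1) r) = b (r + 1) := fun r => by
    simp only [b]
    rw [add_sub_cancel_right]
    exact htr _ _ _ _
  have hfin (φ : ∀ r, K.X r ⟶ K.X r) :
      (fun r : ℤ => (r.negOnePow : ℤ) • τ (K.X r) (φ r)).HasFiniteSupport :=
    (Finset.finite_toSet s).subset (support_negOnePow_smul_trace_subset τ hadd hs φ)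
  have ha := hfin fun r => K.d r (r + 1) ≫ H.hom (r + 1) r
  have hb := hfin fun r => H.hom r (r - 1) ≫ K.d (r - 1) r
  simp only [lefschetzNumber, hf, smul_add]
  rw [finsum_add_distrib (ha.fun_add hb) (hfin g.f), finsum_add_distrib ha hb]
  simp only [hshift]
  rw [finsum_negOnePow_smul_comp_add_one, neg_add_cancel, zero_add]

lemma lefschetzNumber_id_eq_sum {K : CochainComplex C ℤ} {s : Finset ℤ}
    (hs : ∀ r, r ∉ s → IsZero (K.X r)) :
    lefschetzNumber τ (𝟙 K) = ∑ r ∈ s, (r.negOnePow : ℤ) • τ (K.X r) (𝟙 (K.X r)) :=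
  finsum_eq_sum_of_support_subset _ (support_negOnePow_smul_trace_subset τ hadd hs _)

end CochainComplex

/-- Homotopy equivalent bounded complexes over a preadditive category with a trace `τ`
have equal τ-Euler characteristics `χ_τ(Ω) = Σᵣ (−1)ʳ τ(I_{Ωʳ})`. -/
theorem euler_characteristic_homotopy_invariant {C : Type*} [Category C] [Preadditive C]
    {A : Type*} [AddCommGroup A]
    (τ : ∀ X : C, (X ⟶ X) → A)
    (hadd : ∀ (X : C) (f g : X ⟶ X), τ X (f + g) = τ X f + τ X g)
    (htr : ∀ (X Y : C) (F : X ⟶ Y) (G : Y ⟶ X), τ X (F ≫ G) = τ Y (G ≫ F))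
    (Ka Kb : CochainComplex C ℤ)
    -- boundedness: Ka and Kb are supported on the finite sets sa and sb
    (sa sb : Finset ℤ)
    (hsa : ∀ r : ℤ, r ∉ sa → IsZero (Ka.X r)) (hsb : ∀ r : ℤ, r ∉ sb → IsZero (Kb.X r))
    (h : Nonempty (HomotopyEquiv Ka Kb)) :
    ∑ r ∈ sa, ((r.negOnePow : ℤ) • τ (Ka.X r) (𝟙 (Ka.X r)))
      = ∑ r ∈ sb, ((r.negOnePow : ℤ) • τ (Kb.X r) (𝟙 (Kb.X r))) := by
  obtain ⟨e⟩ := h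
  open CochainComplex in
  calc _ = lefschetzNumber τ (𝟙 Ka) := (lefschetzNumber_id_eq_sum τ hadd hsa).symm
    _ = lefschetzNumber τ (e.hom ≫ e.inv) :=
        (lefschetzNumber_eq_of_homotopy τ hadd htr hsa e.homotopyHomInvId).symm
    _ = lefschetzNumber τ (e.inv ≫ e.hom) := lefschetzNumber_comp_comm τ htr _ _
    _ = lefschetzNumber τ (𝟙 Kb) :=
        lefschetzNumber_eq_of_homotopy τ hadd htr hsb e.homotopyInvHomId
    _ = _ := lefschetzNumber_id_eq_sum τ hadd hsb
end

section
/- The trace group of the category of finite-dimensional vector spaces over a field 𝔽 (with all linear maps as morphisms) is isomorphic to 𝔽, generated by the class of the identity on a one-dimensional space, and the isomorphism is induced by the ordinary trace of linear endomorphisms. -/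
/-!
The total trace `⨁ M, End M → F` vanishes on the relations because `tr (g ∘ f) = tr (f ∘ g)`, so
it descends to the trace group. Conversely, every endomorphism of `M` is a sum of rank-one maps
`x ↦ φ x • v`, and such a map factors through `F` as `M → F → M`; swapping the two factors shows
that its class equals the class of `(φ v) • 𝟙 F`. Hence `c ↦ [c • 𝟙 F]` is inverse to the trace.
-/

open CategoryTheory
open scoped DirectSum

attribute [local instance] Classical.propDecidable

variable (F : Type) [Field F]

/-- The direct sum of the endomorphism groups of all finite-dimensional `F`-vector
spaces. -/
abbrev FdVecEnd : Type 1 := ⨁ M : FGModuleCat F, (M ⟶ M)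

/-- The subgroup generated by the trace relations `fg − gf` for `f : M₁ ⟶ M₂`
and `g : M₂ ⟶ M₁`. -/
def fdVecTraceRelations : AddSubgroup (FdVecEnd F) :=
  AddSubgroup.closure
    {x | ∃ (M₁ M₂ : FGModuleCat F) (f : M₁ ⟶ M₂) (g : M₂ ⟶ M₁),
      x = DirectSum.of (fun M : FGModuleCat F => M ⟶ M) M₁ (f ≫ g)
        - DirectSum.of (fun M : FGModuleCat F => M ⟶ M) M₂ (g ≫ f)}

@[simp]
theorem FGModuleCat.hom_hom_smul {R : Type*} [CommRing R] {M N : FGModuleCat R} (c : R)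
    (f : M ⟶ N) : (c • f).hom.hom = c • f.hom.hom :=
  rfl

namespace FdVecEnd

variable {F}

variable (F) in
abbrev TraceGroup : Type 1 := FdVecEnd F ⧸ fdVecTraceRelations F

noncomputable abbrev of (M : FGModuleCat F) : (M ⟶ M) →+ FdVecEnd F :=
  DirectSum.of (fun M : FGModuleCat F => M ⟶ M) M

noncomputable def ofLinear (M : FGModuleCat F) : (M →ₗ[F] M) →+ FdVecEnd F :=
  (of M).comp
    (AddMonoidHom.mk' (fun g => ObjectProperty.homMk (ModuleCat.ofHom g)) fun _ _ => rfl)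

@[simp]
theorem ofLinear_hom (M : FGModuleCat F) (f : M ⟶ M) : ofLinear M f.hom.hom = of M f :=
  rfl

theorem ofLinear_apply (M : FGModuleCat F) (g : M →ₗ[F] M) :
    ofLinear M g = of M (ObjectProperty.homMk (ModuleCat.ofHom g)) := rfl

variable (F) in
noncomputable def trace : FdVecEnd F →+ F :=
  DirectSum.toAddMonoid fun M =>
    (LinearMap.trace F M).toAddMonoidHom.comp
      (AddMonoidHom.mk' (fun f : M ⟶ M => f.hom.hom) fun _ _ => rfl)

theorem trace_of (M : FGModuleCat F) (f : M ⟶ M) :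
    trace F (of M f) = LinearMap.trace F M f.hom.hom :=
  DirectSum.toAddMonoid_of _ _ _

theorem traceRelations_le_ker_trace : fdVecTraceRelations F ≤ (trace F).ker := by
  rw [fdVecTraceRelations, AddSubgroup.closure_le]
  rintro _ ⟨M₁, M₂, f, g, rfl⟩
  simpa [trace_of, sub_eq_zero] using LinearMap.trace_comp_comm' f.hom.hom g.hom.hom

theorem mk_of_comp_comm {M₁ M₂ : FGModuleCat F} (f : M₁ ⟶ M₂) (g : M₂ ⟶ M₁) :
    (of M₁ (f ≫ g) : TraceGroup F) = of M₂ (g ≫ f) :=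
  (QuotientAddGroup.eq_iff_sub_mem).2 (AddSubgroup.subset_closure ⟨M₁, M₂, f, g, rfl⟩)

variable (F) in
noncomputable def scalarClass : F →+ TraceGroup F :=
  AddMonoidHom.mk' (fun c => (of (FGModuleCat.of F F) (c • 𝟙 _) : TraceGroup F))
    fun _ _ => by simp [add_smul]

theorem scalarClass_one :
    scalarClass F 1 = (of (FGModuleCat.of F F) (𝟙 _) : TraceGroup F) := by
  simp [scalarClass]

theorem mk_ofLinear_smulRight (M : FGModuleCat F) (φ : M →ₗ[F] F) (v : M) :
    (ofLinear M (φ.smulRight v) : TraceGroup F) = scalarClass F (φ v) := by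
  let f : M ⟶ FGModuleCat.of F F := ObjectProperty.homMk (ModuleCat.ofHom φ)
  let g : FGModuleCat.of F F ⟶ M :=
    ObjectProperty.homMk (ModuleCat.ofHom (LinearMap.toSpanSingleton F M v))
  have hfg : ObjectProperty.homMk (ModuleCat.ofHom (φ.smulRight v)) = f ≫ g := by
    ext; simp [f, g]
  have hgf : g ≫ f = φ v • 𝟙 (FGModuleCat.of F F) := by
    ext; simp [f, g]
  simpa [ofLinear_apply, scalarClass, hfg, hgf] using mk_of_comp_comm f g

theorem mk_ofLinear (M : FGModuleCat F) (g : M →ₗ[F] M) :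
    (ofLinear M g : TraceGroup F) = scalarClass F (LinearMap.trace F M g) := by
  obtain ⟨x, rfl⟩ := (dualTensorHomEquiv F M M).surjective g
  induction x using TensorProduct.induction_on with
  | zero => simp
  | tmul φ v =>
    have hφv : dualTensorHomEquiv F M M (φ ⊗ₜ v) = φ.smulRight v := by ext; simp
    rw [hφv, mk_ofLinear_smulRight, LinearMap.trace_smulRight]
  | add x y hx hy => simp_all

variable (F) in
noncomputable def quotTrace : TraceGroup F →+ F :=
  QuotientAddGroup.lift _ (trace F) traceRelations_le_ker_trace

theorem quotTrace_mk_of (M : FGModuleCat F) (f : M ⟶ M) :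
    quotTrace F (of M f) = LinearMap.trace F M f.hom.hom :=
  trace_of M f

theorem quotTrace_scalarClass (c : F) : quotTrace F (scalarClass F c) = c := by
  simp [scalarClass, quotTrace_mk_of]

theorem scalarClass_comp_quotTrace :
    (scalarClass F).comp (quotTrace F) = AddMonoidHom.id _ := by
  refine QuotientAddGroup.addMonoidHom_ext _ (DirectSum.addHom_ext fun M f => ?_)
  simpa [quotTrace_mk_of] using (mk_ofLinear M f.hom.hom).symm

variable (F) in
noncomputable def traceEquiv : TraceGroup F ≃+ F :=
  (quotTrace F).toAddEquiv (scalarClass F) scalarClass_comp_quotTrace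
    (AddMonoidHom.ext quotTrace_scalarClass)

end FdVecEnd

/-- The trace group of the category of finite-dimensional `F`-vector spaces is
isomorphic to `F`, via the ordinary trace of linear endomorphisms; it is generated
by the class of the identity of the one-dimensional space `F`. -/
theorem trace_group_fdVec :
    ∃ e : (FdVecEnd F ⧸ fdVecTraceRelations F) ≃+ F,
      (∀ (M : FGModuleCat F) (f : M ⟶ M),
        e (QuotientAddGroup.mk (DirectSum.of (fun M : FGModuleCat F => M ⟶ M) M f))
          = LinearMap.trace F M f.hom.hom) ∧
      e (QuotientAddGroup.mk (DirectSum.of (fun M : FGModuleCat F => M ⟶ M)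
          (FGModuleCat.of F F) (𝟙 (FGModuleCat.of F F)))) = 1 := by
  refine ⟨FdVecEnd.traceEquiv F, FdVecEnd.quotTrace_mk_of, ?_⟩
  rw [← FdVecEnd.scalarClass_one]
  exact FdVecEnd.quotTrace_scalarClass 1
end

section
/- Let V be the free module over R = 𝔽₂[H] on v₊, v₋, and define Δ₃(v₊) = v₊⊗v₋ + v₋⊗v₊ + H·v₊⊗v₊, Δ₃(v₋) = v₋⊗v₋, m₃(v₊⊗v₊)=v₊, m₃(v₊⊗v₋)=m₃(v₋⊗v₊)=v₋, m₃(v₋⊗v₋)=H·v₋, ε(1)=v₊, η(v₊)=0, η(v₋)=1. Then (V, m₃, ε, Δ₃, η) is a commutative Frobenius algebra over 𝔽₂[H]. -/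
/-!
The characteristic-2 variant of Khovanov's Frobenius algebra over `𝔽₂[H]`
(Section 9.3 of Bar-Natan's paper). We model `V = R⟨v₊, v₋⟩` as `R × R`
with `v₊ = (1,0)`, `v₋ = (0,1)`, where `R = 𝔽₂[H]`.
-/

open TensorProduct

/-- The ring `𝔽₂[H]`. -/
abbrev R : Type := Polynomial (ZMod 2)

/-- The handle element `H`. -/
noncomputable def H : R := Polynomial.X

abbrev V : Type := R × R

noncomputable def vp : V := (1, 0)
noncomputable def vm : V := (0, 1)

/-- The multiplication `m₃`: `m₃(v₊⊗v₊)=v₊`, `m₃(v₊⊗v₋)=m₃(v₋⊗v₊)=v₋`,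
`m₃(v₋⊗v₋)=H·v₋`. -/
noncomputable def mB : V →ₗ[R] V →ₗ[R] V :=
  LinearMap.mk₂ R (fun a b => (a.1 * b.1, a.1 * b.2 + a.2 * b.1 + H * (a.2 * b.2)))
    (by intros; simp only [Prod.fst_add, Prod.snd_add, Prod.smul_fst, Prod.smul_snd,
      smul_eq_mul, Prod.mk_add_mk, Prod.smul_mk, Prod.mk.injEq]; constructor <;> ring)
    (by intros; simp only [Prod.fst_add, Prod.snd_add, Prod.smul_fst, Prod.smul_snd,
      smul_eq_mul, Prod.mk_add_mk, Prod.smul_mk, Prod.mk.injEq]; constructor <;> ring)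
    (by intros; simp only [Prod.fst_add, Prod.snd_add, Prod.smul_fst, Prod.smul_snd,
      smul_eq_mul, Prod.mk_add_mk, Prod.smul_mk, Prod.mk.injEq]; constructor <;> ring)
    (by intros; simp only [Prod.fst_add, Prod.snd_add, Prod.smul_fst, Prod.smul_snd,
      smul_eq_mul, Prod.mk_add_mk, Prod.smul_mk, Prod.mk.injEq]; constructor <;> ring)

noncomputable def mV : V ⊗[R] V →ₗ[R] V := TensorProduct.lift mB

/-- The unit `ε(1) = v₊`. -/
noncomputable def εV : R →ₗ[R] V := LinearMap.toSpanSingleton R V vp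

/-- The counit `η(v₊)=0`, `η(v₋)=1`. -/
noncomputable def ηV : V →ₗ[R] R := LinearMap.snd R R R

/-- The comultiplication `Δ₃(v₊)=v₊⊗v₋+v₋⊗v₊+H·v₊⊗v₊`, `Δ₃(v₋)=v₋⊗v₋`. -/
noncomputable def ΔV : V →ₗ[R] V ⊗[R] V :=
  (LinearMap.toSpanSingleton R (V ⊗[R] V) (vp ⊗ₜ vm + vm ⊗ₜ vp + H • (vp ⊗ₜ vp))).comp
    (LinearMap.fst R R R)
  + (LinearMap.toSpanSingleton R (V ⊗[R] V) (vm ⊗ₜ vm)).comp (LinearMap.snd R R R)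


set_option maxHeartbeats 1000000
set_option synthInstance.maxHeartbeats 400000
lemma mV_tmul (a b : V) : mV (a ⊗ₜ b) = (a.1 * b.1, a.1 * b.2 + a.2 * b.1 + H * (a.2 * b.2)) := rfl

lemma decomp (a : V) : a = a.1 • vp + a.2 • vm := by
  simp [vp, vm, Prod.ext_iff]

lemma two_zero {M : Type*} [AddCommMonoid M] [Module R M] (t : M) : t + t = 0 := by
  have h2 : (2 : R) = 0 := CharTwo.two_eq_zero
  have : t + t = (2 : R) • t := by rw [two_smul]
  rw [this, h2, zero_smul]

lemma ΔV_vp : ΔV vp = vp ⊗ₜ vm + vm ⊗ₜ vp + H • (vp ⊗ₜ vp) := by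
  simp [ΔV, vp, vm]

lemma ΔV_vm : ΔV vm = vm ⊗ₜ vm := by
  simp [ΔV, vp, vm]

lemma mV_pp : mV (vp ⊗ₜ vp) = vp := by simp [mV_tmul, vp, vm]
lemma mV_pm : mV (vp ⊗ₜ vm) = vm := by simp [mV_tmul, vp, vm]
lemma mV_mp : mV (vm ⊗ₜ vp) = vm := by simp [mV_tmul, vp, vm]
lemma mV_mm : mV (vm ⊗ₜ vm) = H • vm := by simp [mV_tmul, vp, vm, Prod.ext_iff]

lemma εV_one : εV 1 = vp := by simp [εV]

/-- LHS of the Frobenius relation as a bilinear map. -/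
noncomputable def lhsF : V →ₗ[R] V →ₗ[R] V ⊗[R] V :=
  ((TensorProduct.mk R V (V ⊗[R] V)).compl₂ ΔV).compr₂
    ((TensorProduct.map mV LinearMap.id) ∘ₗ (TensorProduct.assoc R V V V).symm.toLinearMap)

/-- RHS of the Frobenius relation as a bilinear map. -/
noncomputable def rhsF : V →ₗ[R] V →ₗ[R] V ⊗[R] V := mB.compr₂ ΔV

lemma lhsF_apply (a b : V) : lhsF a b =
    (TensorProduct.map mV (LinearMap.id : V →ₗ[R] V))
      ((TensorProduct.assoc R V V V).symm (a ⊗ₜ ΔV b)) := rfl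

lemma rhsF_apply (a b : V) : rhsF a b = ΔV (mV (a ⊗ₜ b)) := rfl

lemma frob_pp : lhsF vp vp = rhsF vp vp := by
  simp only [lhsF_apply, rhsF_apply, ΔV_vp, tmul_add, tmul_smul, map_add, map_smul,
    TensorProduct.assoc_symm_tmul, TensorProduct.map_tmul, LinearMap.id_coe, id_eq,
    mV_pp, mV_pm, mV_mp]

lemma frob_pm : lhsF vp vm = rhsF vp vm := by
  simp only [lhsF_apply, rhsF_apply, ΔV_vp, ΔV_vm, tmul_add, tmul_smul, map_add, map_smul,
    TensorProduct.assoc_symm_tmul, TensorProduct.map_tmul, LinearMap.id_coe, id_eq,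
    mV_pp, mV_pm, mV_mp]

lemma frob_mp : lhsF vm vp = rhsF vm vp := by
  simp only [lhsF_apply, rhsF_apply, ΔV_vp, ΔV_vm, tmul_add, tmul_smul, map_add, map_smul,
    TensorProduct.assoc_symm_tmul, TensorProduct.map_tmul, LinearMap.id_coe, id_eq,
    mV_pp, mV_pm, mV_mp, mV_mm, smul_tmul']
  rw [show mV ((H • vm) ⊗ₜ[R] vp) = H • vm from by
        simp [mV_tmul, vp, vm, Prod.ext_iff],
    add_assoc, two_zero, add_zero]

lemma frob_mm : lhsF vm vm = rhsF vm vm := by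
  simp only [lhsF_apply, rhsF_apply, ΔV_vp, ΔV_vm, tmul_add, tmul_smul, map_add, map_smul,
    TensorProduct.assoc_symm_tmul, TensorProduct.map_tmul, LinearMap.id_coe, id_eq,
    mV_pp, mV_pm, mV_mp, mV_mm, smul_tmul']

lemma ηV_vp : ηV vp = 0 := rfl
lemma ηV_vm : ηV vm = 1 := rfl

lemma coassoc_vp : (TensorProduct.assoc R V V V)
      ((TensorProduct.map ΔV (LinearMap.id : V →ₗ[R] V)) (ΔV vp))
    = (TensorProduct.map (LinearMap.id : V →ₗ[R] V) ΔV) (ΔV vp) := by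
  simp only [ΔV_vp, ΔV_vm, map_add, map_smul, TensorProduct.map_tmul,
    TensorProduct.assoc_tmul, add_tmul, tmul_add, tmul_smul,
    ← TensorProduct.smul_tmul', LinearMap.id_coe, id_eq, smul_add]
  module

lemma coassoc_vm : (TensorProduct.assoc R V V V)
      ((TensorProduct.map ΔV (LinearMap.id : V →ₗ[R] V)) (ΔV vm))
    = (TensorProduct.map (LinearMap.id : V →ₗ[R] V) ΔV) (ΔV vm) := by
  simp only [ΔV_vm, TensorProduct.map_tmul, TensorProduct.assoc_tmul,
    LinearMap.id_coe, id_eq]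

lemma cocomm_vp : (TensorProduct.comm R V V) (ΔV vp) = ΔV vp := by
  simp only [ΔV_vp, map_add, map_smul, TensorProduct.comm_tmul, tmul_smul,
    ← TensorProduct.smul_tmul']
  module

lemma cocomm_vm : (TensorProduct.comm R V V) (ΔV vm) = ΔV vm := by
  simp only [ΔV_vm, TensorProduct.comm_tmul]

lemma counitL_vp : (TensorProduct.lid R V)
    ((TensorProduct.map ηV (LinearMap.id : V →ₗ[R] V)) (ΔV vp)) = vp := by
  simp only [ΔV_vp, map_add, map_smul, TensorProduct.map_tmul, ηV_vp, ηV_vm,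
    LinearMap.id_coe, id_eq, TensorProduct.zero_tmul, TensorProduct.lid_tmul,
    one_smul, smul_zero, zero_add, add_zero, map_zero]

lemma counitL_vm : (TensorProduct.lid R V)
    ((TensorProduct.map ηV (LinearMap.id : V →ₗ[R] V)) (ΔV vm)) = vm := by
  simp only [ΔV_vm, TensorProduct.map_tmul, ηV_vm, LinearMap.id_coe, id_eq,
    TensorProduct.lid_tmul, one_smul]

lemma counitR_vp : (TensorProduct.rid R V)
    ((TensorProduct.map (LinearMap.id : V →ₗ[R] V) ηV) (ΔV vp)) = vp := by
  simp only [ΔV_vp, map_add, map_smul, TensorProduct.map_tmul, ηV_vp, ηV_vm,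
    LinearMap.id_coe, id_eq, TensorProduct.tmul_zero, TensorProduct.rid_tmul,
    one_smul, smul_zero, zero_add, add_zero, map_zero]

lemma counitR_vm : (TensorProduct.rid R V)
    ((TensorProduct.map (LinearMap.id : V →ₗ[R] V) ηV) (ΔV vm)) = vm := by
  simp only [ΔV_vm, TensorProduct.map_tmul, ηV_vm, LinearMap.id_coe, id_eq,
    TensorProduct.rid_tmul, one_smul]
/-- `(V, m₃, ε, Δ₃, η)` is a commutative Frobenius algebra over `𝔽₂[H]`. -/
theorem char_two_frobenius :
    (mV (vp ⊗ₜ vp) = vp ∧ mV (vp ⊗ₜ vm) = vm ∧ mV (vm ⊗ₜ vp) = vm ∧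
      mV (vm ⊗ₜ vm) = H • vm) ∧
    (εV 1 = vp) ∧
    (ΔV vp = vp ⊗ₜ vm + vm ⊗ₜ vp + H • (vp ⊗ₜ vp) ∧ ΔV vm = vm ⊗ₜ vm) ∧
    (ηV vp = 0 ∧ ηV vm = 1) ∧
    -- m₃ is associative
    (∀ a b c : V, mV (mV (a ⊗ₜ b) ⊗ₜ c) = mV (a ⊗ₜ mV (b ⊗ₜ c))) ∧
    -- m₃ is commutative
    (∀ a b : V, mV (a ⊗ₜ b) = mV (b ⊗ₜ a)) ∧
    -- ε(1) is a unit
    (∀ a : V, mV (εV 1 ⊗ₜ a) = a ∧ mV (a ⊗ₜ εV 1) = a) ∧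
    -- Δ₃ is coassociative
    (∀ a : V, (TensorProduct.assoc R V V V)
        ((TensorProduct.map ΔV (LinearMap.id : V →ₗ[R] V)) (ΔV a))
      = (TensorProduct.map (LinearMap.id : V →ₗ[R] V) ΔV) (ΔV a)) ∧
    -- Δ₃ is cocommutative
    (∀ a : V, (TensorProduct.comm R V V) (ΔV a) = ΔV a) ∧
    -- η is a counit
    (∀ a : V, (TensorProduct.lid R V) ((TensorProduct.map ηV (LinearMap.id : V →ₗ[R] V)) (ΔV a)) = a
      ∧ (TensorProduct.rid R V) ((TensorProduct.map (LinearMap.id : V →ₗ[R] V) ηV) (ΔV a)) = a) ∧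
    -- the Frobenius relation
    (∀ a b : V, (TensorProduct.map mV (LinearMap.id : V →ₗ[R] V))
        ((TensorProduct.assoc R V V V).symm (a ⊗ₜ ΔV b)) = ΔV (mV (a ⊗ₜ b))) := by
  refine ⟨⟨mV_pp, mV_pm, mV_mp, mV_mm⟩, εV_one, ⟨ΔV_vp, ΔV_vm⟩, ⟨ηV_vp, ηV_vm⟩,
    ?_, ?_, ?_, ?_, ?_, ?_, ?_⟩
  · intro a b c
    simp only [mV_tmul, Prod.mk.injEq]
    constructor <;> ring
  · intro a b
    simp only [mV_tmul, Prod.mk.injEq]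
    constructor <;> ring
  · intro a
    rw [εV_one]
    constructor <;> simp [mV_tmul, vp, Prod.ext_iff]
  · intro a
    conv_lhs => rw [decomp a]
    conv_rhs => rw [decomp a]
    simp only [map_add, map_smul, coassoc_vp, coassoc_vm]
  · intro a
    conv_lhs => rw [decomp a]
    conv_rhs => rw [decomp a]
    simp only [map_add, map_smul, cocomm_vp, cocomm_vm]
  · intro a
    constructor
    · conv_lhs => rw [decomp a]
      conv_rhs => rw [decomp a]
      simp only [map_add, map_smul, counitL_vp, counitL_vm]
    · conv_lhs => rw [decomp a]
      conv_rhs => rw [decomp a]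
      simp only [map_add, map_smul, counitR_vp, counitR_vm]
  · intro a b
    have h : lhsF a b = rhsF a b := by
      rw [decomp a, decomp b]
      simp only [map_add, map_smul, LinearMap.add_apply, LinearMap.smul_apply,
        frob_pp, frob_pm, frob_mp, frob_mm]
    simpa only [lhsF_apply, rhsF_apply] using h
end

section
/- Let C be a preadditive category and Mat(C) its additive closure. Then the trace groups agree: Ξ(Mat(C)) ≅ Ξ(C), the isomorphism being induced by sending an endomorphism matrix (F_{ij}) of ⊕ᵢOᵢ to Σᵢ [F_{ii}] ∈ Ξ(C). -/
/-!
Summing the classes of the diagonal entries is invariant under `F ≫ G ↦ G ≫ F`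
(swap the two sums in `Σᵢ Σⱼ [Fᵢⱼ Gⱼᵢ]` and use `[Fᵢⱼ Gⱼᵢ] = [Gⱼᵢ Fᵢⱼ]`), so it descends to
`Ξ(Mat C) → Ξ(C)`; the embedding of `C` as one-by-one matrices induces a map back.
One composite is visibly the identity. For the other, an object of `Mat C` is the biproduct
of its entries, and in any preadditive category the class of an endomorphism `f` of a
biproduct is `Σᵢ [ιᵢ f πᵢ]`, since `f = Σᵢ f πᵢ ιᵢ` and `[(f πᵢ) ιᵢ] = [ιᵢ (f πᵢ)]`.
-/

open CategoryTheory
open scoped DirectSum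

attribute [local instance] Classical.propDecidable

universe v u

/-- The direct sum of all endomorphism groups of a preadditive category. -/
abbrev EndSum (D : Type u) [Category.{v} D] [Preadditive D] : Type (max u v) :=
  ⨁ X : D, (X ⟶ X)

/-- The subgroup of trace relations `fg − gf`, for `f : X ⟶ Y`, `g : Y ⟶ X`. -/
def traceRel (D : Type u) [Category.{v} D] [Preadditive D] : AddSubgroup (EndSum D) :=
  AddSubgroup.closure
    {x | ∃ (X Y : D) (f : X ⟶ Y) (g : Y ⟶ X),
      x = DirectSum.of (fun Z : D => Z ⟶ Z) X (f ≫ g)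
        - DirectSum.of (fun Z : D => Z ⟶ Z) Y (g ≫ f)}

/-- The trace group `Ξ(D)` of a preadditive category `D`. -/
def Xi (D : Type u) [Category.{v} D] [Preadditive D] : Type (max u v) :=
  EndSum D ⧸ traceRel D

instance (D : Type u) [Category.{v} D] [Preadditive D] : AddCommGroup (Xi D) :=
  QuotientAddGroup.Quotient.addCommGroup (traceRel D)

/-- The canonical class of an endomorphism in the trace group. -/
noncomputable def toXi {D : Type u} [Category.{v} D] [Preadditive D] {X : D} (f : X ⟶ X) : Xi D :=
  QuotientAddGroup.mk (DirectSum.of (fun Z : D => Z ⟶ Z) X f)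

namespace Xi

section

variable {D : Type u} [Category.{v} D] [Preadditive D]

noncomputable def toXiAddHom (X : D) : (X ⟶ X) →+ Xi D :=
  (QuotientAddGroup.mk' (traceRel D)).comp (DirectSum.of (fun Z : D => Z ⟶ Z) X)

lemma toXiAddHom_apply {X : D} (f : X ⟶ X) : toXiAddHom X f = toXi f := rfl

lemma toXi_add {X : D} (f g : X ⟶ X) : toXi (f + g) = toXi f + toXi g :=
  (toXiAddHom X).map_add f g

lemma toXi_sum {X : D} {ι : Type*} (s : Finset ι) (f : ι → (X ⟶ X)) :
    toXi (∑ i ∈ s, f i) = ∑ i ∈ s, toXi (f i) :=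
  map_sum (toXiAddHom X) f s

lemma toXi_comp_comm {X Y : D} (f : X ⟶ Y) (g : Y ⟶ X) : toXi (f ≫ g) = toXi (g ≫ f) :=
  (QuotientAddGroup.eq_iff_sub_mem ..).2 (AddSubgroup.subset_closure ⟨X, Y, f, g, rfl⟩)

lemma toXi_conj {X Y : D} (e : X ≅ Y) (f : Y ⟶ Y) : toXi (e.hom ≫ f ≫ e.inv) = toXi f := by
  rw [toXi_comp_comm, Category.assoc, e.inv_hom_id, Category.comp_id]

open Limits in
lemma toXi_biproduct_eq_sum {ι : Type} [Fintype ι] {F : ι → D} [HasBiproduct F] (f : ⨁ F ⟶ ⨁ F) :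
    toXi f = ∑ i, toXi (biproduct.ι F i ≫ f ≫ biproduct.π F i) := by
  conv_lhs => rw [← Category.comp_id f, ← biproduct.total (f := F), Preadditive.comp_sum]
  rw [toXi_sum]
  refine Finset.sum_congr rfl fun i _ => ?_
  rw [← Category.assoc, toXi_comp_comm]

noncomputable def lift {A : Type*} [AddCommGroup A] (t : ∀ X : D, (X ⟶ X) →+ A)
    (ht : ∀ (X Y : D) (f : X ⟶ Y) (g : Y ⟶ X), t X (f ≫ g) = t Y (g ≫ f)) : Xi D →+ A :=
  QuotientAddGroup.lift (traceRel D) (DirectSum.toAddMonoid t) <| by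
    rw [traceRel, AddSubgroup.closure_le]
    rintro _ ⟨X, Y, f, g, rfl⟩
    simp only [SetLike.mem_coe, AddMonoidHom.mem_ker, map_sub, DirectSum.toAddMonoid_of,
      ht X Y f g, sub_self]

@[simp]
lemma lift_toXi {A : Type*} [AddCommGroup A] (t : ∀ X : D, (X ⟶ X) →+ A)
    (ht : ∀ (X Y : D) (f : X ⟶ Y) (g : Y ⟶ X), t X (f ≫ g) = t Y (g ≫ f)) {X : D}
    (f : X ⟶ X) : lift t ht (toXi f) = t X f :=
  DirectSum.toAddMonoid_of t X f

@[ext]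
lemma addMonoidHom_ext {A : Type*} [AddMonoid A] {φ ψ : Xi D →+ A}
    (h : ∀ (X : D) (f : X ⟶ X), φ (toXi f) = ψ (toXi f)) : φ = ψ :=
  QuotientAddGroup.addMonoidHom_ext _ (DirectSum.addHom_ext h)

noncomputable def map {E : Type*} [Category E] [Preadditive E] (F : D ⥤ E) [F.Additive] :
    Xi D →+ Xi E :=
  lift (fun X => (toXiAddHom (F.obj X)).comp F.mapAddHom) fun X Y f g => by
    simp only [AddMonoidHom.comp_apply, Functor.mapAddHom_apply, toXiAddHom_apply, F.map_comp,
      toXi_comp_comm (F.map f)]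

@[simp]
lemma map_toXi {E : Type*} [Category E] [Preadditive E] (F : D ⥤ E) [F.Additive] {X : D}
    (f : X ⟶ X) : map F (toXi f) = toXi (F.map f) :=
  lift_toXi _ _ f

end

variable (C : Type u) [Category.{v} C] [Preadditive C]

noncomputable def matTrace : Xi (Mat_ C) →+ Xi C :=
  lift (fun M => AddMonoidHom.mk' (fun f => ∑ i : M.ι, toXi (f i i))
      fun f g => by simp only [Mat_.add_apply, toXi_add, Finset.sum_add_distrib])
    fun M N f g => by
      simp only [AddMonoidHom.mk'_apply, Mat_.comp_apply, toXi_sum]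
      rw [Finset.sum_comm]
      simp only [toXi_comp_comm (f _ _)]

lemma matTrace_toXi {M : Mat_ C} (f : M ⟶ M) : matTrace C (toXi f) = ∑ i : M.ι, toXi (f i i) :=
  lift_toXi _ _ f

end Xi

namespace CategoryTheory.Mat_

open Limits

variable {C : Type u} [Category.{v} C] [Preadditive C]

lemma sum_dite_eqToHom_comp_comp_dite_eqToHom {ι : Type*} [Fintype ι] {X : ι → C}
    (g : ∀ k l, X k ⟶ X l) (i j : ι) :
    ∑ l, (∑ k, (if h : i = k then eqToHom (congrArg X h) else 0) ≫ g k l) ≫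
      (if h : l = j then eqToHom (congrArg X h) else 0) = g i j := by
  simp [dite_comp, comp_dite]

lemma ι_isoBiproductEmbedding_inv_apply (M : Mat_ C) (i k : M.ι) :
    (biproduct.ι _ i ≫ (isoBiproductEmbedding M).inv) PUnit.unit k =
      if h : i = k then eqToHom (congrArg M.X h) else 0 := by
  rw [isoBiproductEmbedding_inv]
  erw [biproduct.ι_desc]
  rfl

lemma isoBiproductEmbedding_hom_π_apply (M : Mat_ C) (k j : M.ι) :
    ((isoBiproductEmbedding M).hom ≫ biproduct.π _ j) k PUnit.unit =
      if h : k = j then eqToHom (congrArg M.X h) else 0 := by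
  rw [isoBiproductEmbedding_hom]
  erw [biproduct.lift_π]
  rfl

lemma ι_isoBiproductEmbedding_inv_comp_comp_hom_π {M : Mat_ C} (f : M ⟶ M) (i j : M.ι) :
    biproduct.ι _ i ≫ (isoBiproductEmbedding M).inv ≫ f ≫ (isoBiproductEmbedding M).hom ≫
      biproduct.π _ j = (embedding C).map (f i j) := by
  have hq := ι_isoBiproductEmbedding_inv_apply M i
  have hp := fun k => isoBiproductEmbedding_hom_π_apply M k j
  rw [← Category.assoc, ← Category.assoc]
  -- so that `comp_apply` below does not also expand the biproduct structure maps
  generalize biproduct.ι _ i ≫ (isoBiproductEmbedding M).inv = q at hq ⊢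
  generalize (isoBiproductEmbedding M).hom ≫ biproduct.π _ j = p at hp ⊢
  refine hom_ext _ _ fun a b => ?_
  simp only [comp_apply]
  cases a; cases b
  simp only [hq, hp]
  exact sum_dite_eqToHom_comp_comp_dite_eqToHom (fun k l => f k l) i j

end CategoryTheory.Mat_

namespace Xi

variable {C : Type u} [Category.{v} C] [Preadditive C]

open Mat_ in
lemma toXi_eq_sum_toXi_embedding_map {M : Mat_ C} (f : M ⟶ M) :
    toXi f = ∑ i, toXi ((embedding C).map (f i i)) := by
  rw [← toXi_conj (isoBiproductEmbedding M).symm f, toXi_biproduct_eq_sum]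
  simp only [Iso.symm_hom, Iso.symm_inv, Category.assoc, ι_isoBiproductEmbedding_inv_comp_comp_hom_π]

end Xi

open Xi in
/-- The trace groups of a preadditive category `C` and of its additive closure
`Mat(C)` agree, the isomorphism sending (the class of) an endomorphism matrix
`(F_{ij})` of `⊕ᵢ Oᵢ` to `Σᵢ [F_{ii}]`. -/
theorem trace_group_Mat_eq (C : Type u) [Category.{v} C] [Preadditive C] :
    ∃ e : Xi (Mat_ C) ≃+ Xi C,
      ∀ (M : Mat_ C) (f : M ⟶ M),
        e (toXi f) = ∑ i : M.ι, toXi (f i i) := by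
  refine ⟨AddMonoidHom.toAddEquiv (matTrace C) (map (Mat_.embedding C)) ?_ ?_,
    fun M f => matTrace_toXi C f⟩
  · ext M f
    simp only [AddMonoidHom.comp_apply, AddMonoidHom.id_apply, matTrace_toXi, map_sum, map_toXi]
    exact (toXi_eq_sum_toXi_embedding_map f).symm
  · ext X f
    simp only [AddMonoidHom.comp_apply, AddMonoidHom.id_apply, map_toXi, matTrace_toXi]
    exact Fintype.sum_unique (ι := PUnit) fun _ => toXi f
end
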